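/- Let R = Q[[q]] and let D = q·d/dq be the derivation on R. Suppose F : Z^{≥0} × Z^{≥0} → qR satisfies (i) F(b1, b2) = F(b2, b1) for all b1, b2, and (ii) D F(b1, b2) = D F(b1, 0) · F(0, b2 − 1) for all b1 ≥ 0 and b2 ≥ 1. Then for all b1, b2 ≥ 0, F(b1, b2) = [1/(b1+b2+1)!] · C(b1+b2, b1) · F(0,0)^{b1+b2+1}. -/

import Mathlib

noncomputable section

/-!
Cancelling `q`, the recursion says `F(b1,b2)' = F(b1,0)' ⬝ F(0,b2-1)`, and a power series without
constant term is determined by its derivative. With `b1 = 0` this gives, by induction on `b2`,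
`F(0,b) = G^(b+1)/(b+1)!` for `G = F(0,0)`; by symmetry this also determines `F(b1,0)`, and one more
application of the recursion yields every `F(b1,b2)`. Everything reduces to the derivative
`(C(a+b,a)/(a+b+1)! ⬝ G^(a+b+1))' = G^(a+b) G' / (a! b!)`.
-/

open PowerSeries Nat

variable {K : Type*} [Field K]

lemma succ_mul_choose_div_factorial_succ [CharZero K] (a b : ℕ) :
    ((a + b + 1 : ℕ) : K) * ((a + b).choose a / (a + b + 1)!) = ((a ! : K) * b !)⁻¹ := by
  have : ((a + b + 1 : ℕ) : K) ≠ 0 := Nat.cast_ne_zero.2 (succ_ne_zero _)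
  rw [cast_add_choose, factorial_succ, cast_mul]
  field_simp [factorial_ne_zero]

def closedForm (G : K⟦X⟧) (a b : ℕ) : K⟦X⟧ :=
  (((a + b).choose a : K) / (a + b + 1)!) • G ^ (a + b + 1)

lemma closedForm_zero_left (G : K⟦X⟧) (b : ℕ) :
    closedForm G 0 b = ((b + 1)! : K)⁻¹ • G ^ (b + 1) := by
  simp [closedForm]

lemma closedForm_comm (G : K⟦X⟧) (a b : ℕ) : closedForm G a b = closedForm G b a := by
  rw [closedForm, closedForm, add_comm b, choose_symm_add]

lemma constantCoeff_closedForm {G : K⟦X⟧} (hG : constantCoeff G = 0) (a b : ℕ) :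
    constantCoeff (closedForm G a b) = 0 := by
  simp [closedForm, hG]

lemma derivative_closedForm [CharZero K] (G : K⟦X⟧) (a b : ℕ) :
    d⁄dX K (closedForm G a b) = ((a ! : K) * b !)⁻¹ • (G ^ (a + b) * d⁄dX K G) := by
  rw [closedForm, Derivation.map_smul, Derivation.leibniz_pow, Nat.add_sub_cancel,
    ← succ_mul_choose_div_factorial_succ]
  simp only [smul_eq_C_mul, nsmul_eq_mul, smul_eq_mul, map_mul, map_natCast]
  ring

/-- Let `R = ℚ[[q]]` and `D = q⬝d/dq`. If `F : ℕ × ℕ → qR` is symmetric and satisfies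
`D F(b1,b2) = D F(b1,0) ⬝ F(0,b2-1)` for `b2 ≥ 1`, then
`F(b1,b2) = C(b1+b2,b1)/(b1+b2+1)! ⬝ F(0,0)^{b1+b2+1}`. -/
theorem stmt_8 (F : ℕ → ℕ → PowerSeries ℚ)
    (h0 : ∀ b1 b2, PowerSeries.constantCoeff (F b1 b2) = 0)
    (hsym : ∀ b1 b2, F b1 b2 = F b2 b1)
    (hrec : ∀ b1 b2, 1 ≤ b2 →
      PowerSeries.X * PowerSeries.derivative ℚ (F b1 b2) =
        PowerSeries.X * PowerSeries.derivative ℚ (F b1 0) * F 0 (b2 - 1)) :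
    ∀ b1 b2, F b1 b2 =
      (((b1 + b2).choose b1 : ℚ) / (b1 + b2 + 1).factorial) • F 0 0 ^ (b1 + b2 + 1) := by
  set G := F 0 0
  have hrec' (b1 b2 : ℕ) : d⁄dX ℚ (F b1 (b2 + 1)) = d⁄dX ℚ (F b1 0) * F 0 b2 :=
    mul_left_cancel₀ X_ne_zero (by simpa [mul_assoc] using hrec b1 (b2 + 1) le_add_self)
  have eq_of_derivative_eq (b1 b2 : ℕ) (h : d⁄dX ℚ (F b1 b2) = d⁄dX ℚ (closedForm G b1 b2)) :
      F b1 b2 = closedForm G b1 b2 :=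
    derivative.ext h (by rw [h0, constantCoeff_closedForm (h0 0 0)])
  have hcol (b : ℕ) : F 0 b = closedForm G 0 b := by
    induction b with
    | zero => simp [closedForm, G]
    | succ b ih =>
      refine eq_of_derivative_eq 0 (b + 1) ?_
      rw [hrec', ih, derivative_closedForm, closedForm_zero_left]
      simp only [smul_eq_C_mul, factorial_zero, cast_one, one_mul, zero_add]
      ring
  have hrow (b : ℕ) : F b 0 = closedForm G b 0 := by
    rw [hsym, hcol, closedForm_comm]
  intro b1 b2
  change F b1 b2 = closedForm G b1 b2
  cases b2 with
  | zero => exact hrow b1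
  | succ b2 =>
    refine eq_of_derivative_eq b1 (b2 + 1) ?_
    rw [hrec', hrow, hcol, derivative_closedForm, derivative_closedForm, closedForm_zero_left]
    simp only [smul_eq_C_mul, factorial_zero, cast_one, mul_one, add_zero, mul_inv, map_mul]
    ring
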